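/- Let $E$ be a Hausdorff complete pseudo-$H$-space and let $A$, $B$ be mutually orthogonal linear subspaces of $E$ with $A$ closed. Then $cl(A \oplus B) = A \oplus cl(B)$, and moreover $A$ and $cl(B)$ are mutually orthogonal. -/

import Mathlib

/-!
Orthogonality passes to `cl B` because each `⟨a, ·⟩_α` is continuous by Cauchy–Schwarz. For the
closure, write the points of `A ⊕ B` as `a + b`: by Pythagoras every seminorm `p_α` is contracted
by `a + b ↦ a`, so along a net of such points converging to `x` the `A`-components form a Cauchy
net, whose limit `a` lies in the closed space `A`, while the `B`-components converge to
`x - a ∈ cl B`.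
-/

/-- A (Hausdorff, complete) pseudo-H-space: a real or complex vector space `E` carrying a
family of positive semi-definite (pseudo-)inner products `inn α`, endowed with the topology
induced by the associated seminorms `p α x = sqrt ⟨x,x⟩_α` (expressed via `WithSeminorms`). -/
structure PseudoHSpace (𝕜 : Type*) [RCLike 𝕜] (ι E : Type*) [Nonempty ι]
    [AddCommGroup E] [Module 𝕜 E] [UniformSpace E] [IsUniformAddGroup E] where
  inn : ι → E → E → 𝕜
  p : ι → Seminorm 𝕜 E
  inn_add_left : ∀ (α : ι) (x y z : E), inn α (x + y) z = inn α x z + inn α y z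
  inn_smul_left : ∀ (α : ι) (c : 𝕜) (x y : E), inn α (c • x) y = c * inn α x y
  inn_conj_symm : ∀ (α : ι) (x y : E), (starRingEnd 𝕜) (inn α y x) = inn α x y
  inn_nonneg : ∀ (α : ι) (x : E), 0 ≤ RCLike.re (inn α x x)
  p_sq : ∀ (α : ι) (x : E), (p α x) ^ 2 = RCLike.re (inn α x x)
  topo : WithSeminorms p

open Filter Topology Uniformity

namespace Submodule

variable {R M : Type*} [Ring R] [AddCommGroup M] [Module R M] (A B : Submodule R M)

/-- A choice of `A`-component of a point of `A ⊔ B`. -/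
noncomputable def supProjLeft (u : ↥(A ⊔ B)) : M :=
  (mem_sup.mp u.2).choose

theorem supProjLeft_mem (u : ↥(A ⊔ B)) : A.supProjLeft B u ∈ A :=
  (mem_sup.mp u.2).choose_spec.1

theorem sub_supProjLeft_mem (u : ↥(A ⊔ B)) : (u : M) - A.supProjLeft B u ∈ B := by
  obtain ⟨-, z, hz, hyz⟩ := (mem_sup.mp u.2).choose_spec
  have hz' : (u : M) - A.supProjLeft B u = z := sub_eq_of_eq_add' hyz.symm
  exact hz' ▸ hz

end Submodule

theorem WithSeminorms.cauchy_map_of_le {𝕜 E ι X : Type*} [NormedField 𝕜] [AddCommGroup E]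
    [Module 𝕜 E] [UniformSpace E] [IsUniformAddGroup E] [Nonempty ι]
    {p : SeminormFamily 𝕜 E ι} (hp : WithSeminorms p) {F : Filter X} {f g : X → E}
    (hg : Cauchy (F.map g)) (hfg : ∀ i x y, p i (f x - f y) ≤ p i (g x - g y)) :
    Cauchy (F.map f) := by
  have hU : (𝓤 E).HasBasis (· ∈ p.basisSets) fun s => {q : E × E | q.2 - q.1 ∈ s} := by
    rw [uniformity_eq_comap_nhds_zero E]
    exact hp.hasBasis.comap _
  rw [cauchy_map_iff, hU.tendsto_right_iff] at hg ⊢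
  refine ⟨hg.1, fun s hs => ?_⟩
  obtain ⟨t, r, hr, rfl⟩ := p.basisSets_iff.mp hs
  filter_upwards [hg.2 _ hs] with q hq
  rw [Seminorm.mem_ball_zero] at hq ⊢
  refine lt_of_le_of_lt (Seminorm.finset_sup_apply_le (apply_nonneg _ _) fun i hi => ?_) hq
  exact (hfg i q.2 q.1).trans (Seminorm.le_finset_sup_apply hi)

namespace PseudoHSpace

variable {𝕜 ι E : Type*} [RCLike 𝕜] [Nonempty ι] [AddCommGroup E] [Module 𝕜 E]
  [UniformSpace E] [IsUniformAddGroup E] (P : PseudoHSpace 𝕜 ι E)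

theorem inn_add_right (α : ι) (x y z : E) :
    P.inn α x (y + z) = P.inn α x y + P.inn α x z := by
  rw [← P.inn_conj_symm, P.inn_add_left, map_add, P.inn_conj_symm, P.inn_conj_symm]

theorem inn_smul_right (α : ι) (c : 𝕜) (x y : E) :
    P.inn α x (c • y) = starRingEnd 𝕜 c * P.inn α x y := by
  rw [← P.inn_conj_symm, P.inn_smul_left, map_mul, P.inn_conj_symm]

theorem inn_sub_right (α : ι) (x y z : E) :
    P.inn α x (y - z) = P.inn α x y - P.inn α x z := by
  rw [eq_sub_iff_add_eq, ← P.inn_add_right, sub_add_cancel]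

/-- `inn α` with its arguments swapped, so as to be conjugate-linear in the first one. -/
noncomputable abbrev preInnerProductCore (α : ι) : PreInnerProductSpace.Core 𝕜 E where
  inner x y := P.inn α y x
  conj_inner_symm x y := P.inn_conj_symm α y x
  re_inner_nonneg x := P.inn_nonneg α x
  add_left x y z := P.inn_add_right α z x y
  smul_left x y r := P.inn_smul_right α r y x

theorem norm_inn_le (α : ι) (x y : E) : ‖P.inn α x y‖ ≤ P.p α x * P.p α y := by
  let _ : PreInnerProductSpace.Core 𝕜 E := P.preInnerProductCore α
  have hcs : ‖P.inn α y x‖ * ‖P.inn α x y‖ ≤ RCLike.re (P.inn α x x) * RCLike.re (P.inn α y y) :=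
    InnerProductSpace.Core.inner_mul_inner_self_le (𝕜 := 𝕜) x y
  rw [← P.inn_conj_symm α y x, RCLike.norm_conj, ← P.p_sq, ← P.p_sq, ← mul_pow, ← sq] at hcs
  exact (pow_le_pow_iff_left₀ (norm_nonneg _)
    (mul_nonneg (apply_nonneg _ _) (apply_nonneg _ _)) two_ne_zero).mp hcs

theorem continuous_inn_right (α : ι) (a : E) : Continuous (P.inn α a) := by
  refine continuous_iff_continuousAt.2 fun y₀ => tendsto_iff_norm_sub_tendsto_zero.2 ?_
  have hp : Tendsto (fun y => P.p α (y - y₀)) (𝓝 y₀) (𝓝 0) := by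
    simpa [Function.comp_def] using
      ((P.topo.continuous_seminorm α).comp (continuous_sub_right y₀)).tendsto y₀
  refine squeeze_zero (fun _ => norm_nonneg _) (fun y => ?_) (by simpa using hp.const_mul (P.p α a))
  rw [← P.inn_sub_right]
  exact P.norm_inn_le α a _

theorem inn_eq_zero_of_mem_closure {α : ι} {a : E} {s : Set E} (hs : ∀ b ∈ s, P.inn α a b = 0)
    {c : E} (hc : c ∈ closure s) : P.inn α a c = 0 :=
  closure_minimal hs (isClosed_singleton.preimage (P.continuous_inn_right α a)) hc

theorem p_le_p_add_of_inn_eq_zero (α : ι) {a b : E} (h : P.inn α a b = 0) :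
    P.p α a ≤ P.p α (a + b) := by
  have hba : P.inn α b a = 0 := by rw [← P.inn_conj_symm, h, map_zero]
  have hsq : P.p α (a + b) ^ 2 = P.p α a ^ 2 + P.p α b ^ 2 := by
    rw [P.p_sq, P.p_sq, P.p_sq, P.inn_add_left, P.inn_add_right, P.inn_add_right, h, hba,
      add_zero, zero_add, map_add]
  exact (pow_le_pow_iff_left₀ (apply_nonneg _ _) (apply_nonneg _ _) two_ne_zero).mp
    (hsq ▸ le_add_of_nonneg_right (sq_nonneg _))

variable {P} {A B : Submodule 𝕜 E}

theorem p_supProjLeft_sub_le (horth : ∀ a ∈ A, ∀ b ∈ B, ∀ α : ι, P.inn α a b = 0)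
    (α : ι) (u v : ↥(A ⊔ B)) :
    P.p α (A.supProjLeft B u - A.supProjLeft B v) ≤ P.p α (u - v) := by
  have h := P.p_le_p_add_of_inn_eq_zero α <| horth _
    (A.sub_mem (A.supProjLeft_mem B u) (A.supProjLeft_mem B v)) _
    (B.sub_mem (A.sub_supProjLeft_mem B u) (A.sub_supProjLeft_mem B v)) α
  rwa [show ∀ a b c d : E, a - b + (c - a - (d - b)) = c - d by intros; abel] at h

theorem topologicalClosure_sup_le [ContinuousSMul 𝕜 E] [CompleteSpace E]
    (horth : ∀ a ∈ A, ∀ b ∈ B, ∀ α : ι, P.inn α a b = 0) (hA : IsClosed (A : Set E)) :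
    (A ⊔ B).topologicalClosure ≤ A ⊔ B.topologicalClosure := by
  intro x hx
  let F := comap ((↑) : ↥(A ⊔ B) → E) (𝓝 x)
  have : F.NeBot := mem_closure_iff_comap_neBot.mp hx
  have hval : Tendsto ((↑) : ↥(A ⊔ B) → E) F (𝓝 x) := tendsto_comap
  obtain ⟨a, ha⟩ := CompleteSpace.complete <|
    P.topo.cauchy_map_of_le hval.cauchy_map (p_supProjLeft_sub_le horth)
  have haA : a ∈ A := hA.mem_of_tendsto ha (.of_forall (A.supProjLeft_mem B))
  have hxa : x - a ∈ B.topologicalClosure := isClosed_closure.mem_of_tendsto (hval.sub ha)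
    (.of_forall fun u => subset_closure (A.sub_supProjLeft_mem B u))
  simpa using Submodule.add_mem_sup haA hxa

end PseudoHSpace

theorem stmt2_general {𝕜 : Type*} [RCLike 𝕜] {ι E : Type*} [Nonempty ι] [AddCommGroup E] [Module 𝕜 E]
    [UniformSpace E] [IsUniformAddGroup E] [ContinuousSMul 𝕜 E]
    [CompleteSpace E]
    (P : PseudoHSpace 𝕜 ι E) (A B : Submodule 𝕜 E)
    (hA : IsClosed (A : Set E))
    (horth : ∀ a ∈ A, ∀ b ∈ B, ∀ α : ι, P.inn α a b = 0) :
    (A ⊔ B).topologicalClosure = A ⊔ B.topologicalClosure ∧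
      (∀ a ∈ A, ∀ c ∈ B.topologicalClosure, ∀ α : ι, P.inn α a c = 0) := by
  refine ⟨le_antisymm (PseudoHSpace.topologicalClosure_sup_le horth hA) ?_,
    fun a ha c hc α => P.inn_eq_zero_of_mem_closure (fun b hb => horth a ha b hb α) hc⟩
  exact sup_le (le_sup_left.trans (Submodule.le_topologicalClosure _))
    (Submodule.topologicalClosure_mono le_sup_right)

/-- If `A` and `B` are mutually orthogonal linear subspaces of a Hausdorff complete
pseudo-H-space `E` with `A` closed, then `cl(A ⊕ B) = A ⊕ cl(B)`, and moreover `A` and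
`cl(B)` are mutually orthogonal. -/
theorem stmt2 {𝕜 : Type*} [RCLike 𝕜] {ι E : Type*} [Nonempty ι] [AddCommGroup E] [Module 𝕜 E]
    [UniformSpace E] [IsUniformAddGroup E] [ContinuousSMul 𝕜 E]
    [CompleteSpace E] [T2Space E]
    (P : PseudoHSpace 𝕜 ι E) (A B : Submodule 𝕜 E)
    (hA : IsClosed (A : Set E))
    (horth : ∀ a ∈ A, ∀ b ∈ B, ∀ α : ι, P.inn α a b = 0) :
    (A ⊔ B).topologicalClosure = A ⊔ B.topologicalClosure ∧
      (∀ a ∈ A, ∀ c ∈ B.topologicalClosure, ∀ α : ι, P.inn α a c = 0) :=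
  stmt2_general P A B hA horth
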